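/- arXiv:2502.00349 — 2 statements merged into one kernel-verified Lean document; each statement's English description precedes it below -/
import Mathlib

section
/- For the proportional hazards model Y of X defined by Q_Y(u) = Q_X(1-(1-u)^{1/θ}) with θ > 0, where X has quantile density q_X(u) = (1-u)^{-A}(-log(1-u))^{-B} with A > 0, B < 1, and θ > A - 1, the Q-FCRE of Y equals θ^α Γ(α - B + 1)/(θ - A + 1)^{α-B+1}. -/
open Real Set MeasureTheory

/-! Under `p = 1 - exp (-t)` the weight `(1 - p) dp` becomes `exp (-2t) dt` and `-log (1 - p)`
becomes `t`, so the integrand turns into `θ ^ (B - 1) t ^ (α - B) exp (-(θ - A + 1) t / θ)`,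
whose integral over `(0, ∞)` is a Gamma integral. -/

theorem image_one_sub_exp_neg_Ioi : (fun t : ℝ ↦ 1 - exp (-t)) '' Ioi 0 = Ioo 0 1 := by
  ext p
  constructor
  · rintro ⟨t, ht, rfl⟩
    have : exp (-t) < 1 := exp_lt_one_iff.mpr (neg_lt_zero.mpr ht)
    exact ⟨by linarith, by linarith [exp_pos (-t)]⟩
  · rintro ⟨hp0, hp1⟩
    refine ⟨-log (1 - p), neg_pos.mpr (log_neg (by linarith) (by linarith)), ?_⟩
    simp only [neg_neg, exp_log (sub_pos.mpr hp1), sub_sub_cancel]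

theorem intervalIntegral_zero_one_eq_integral_Ioi_exp_neg {E : Type*} [NormedAddCommGroup E]
    [NormedSpace ℝ E] (F : ℝ → E) :
    ∫ p in (0 : ℝ)..1, F p = ∫ t in Ioi 0, exp (-t) • F (1 - exp (-t)) := by
  have hderiv : ∀ t ∈ Ioi (0 : ℝ),
      HasDerivWithinAt (fun t ↦ 1 - exp (-t)) (exp (-t)) (Ioi 0) t := fun t _ ↦ by
    simpa using ((hasDerivAt_neg t).exp.const_sub 1).hasDerivWithinAt
  have hinj : InjOn (fun t : ℝ ↦ 1 - exp (-t)) (Ioi 0) := fun a _ b _ hab ↦ by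
    simpa using hab
  rw [intervalIntegral.integral_of_le zero_le_one, integral_Ioc_eq_integral_Ioo,
    ← image_one_sub_exp_neg_Ioi,
    integral_image_eq_integral_abs_deriv_smul measurableSet_Ioi hderiv hinj]
  simp only [abs_of_pos (exp_pos _)]

theorem phm_integrand_exp_neg (θ A B α : ℝ) (hθ : 0 < θ) {t : ℝ} (ht : 0 < t) :
    exp (-t) * (exp (-t) * t ^ α * (θ ^ (B - 1) * exp (-t) ^ ((1 - A) / θ - 1) * t ^ (-B)))
      = θ ^ (B - 1) * (t ^ (α - B + 1 - 1) * exp (-((θ - A + 1) / θ * t))) := by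
  have hpow : t ^ (α - B + 1 - 1) = t ^ α * t ^ (-B) := by
    rw [← rpow_add ht]; ring_nf
  have hexp : exp (-t) * exp (-t) * exp (-t) ^ ((1 - A) / θ - 1)
      = exp (-((θ - A + 1) / θ * t)) := by
    rw [← exp_mul, ← exp_add, ← exp_add]
    congr 1
    field_simp
    ring
  rw [hpow, ← hexp]
  ring

theorem qfcre_phm_general (θ A B α : ℝ) (hθ : 0 < θ) (hB : B < 1)
    (hθA : A - 1 < θ) (hα0 : 0 ≤ α) :
    ∫ p in (0:ℝ)..1,
        (1 - p) * (-Real.log (1 - p)) ^ α *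
          (θ ^ (B - 1) * (1 - p) ^ ((1 - A) / θ - 1) * (-Real.log (1 - p)) ^ (-B))
      = θ ^ α * Real.Gamma (α - B + 1) / (θ - A + 1) ^ (α - B + 1) := by
  have hc : 0 < θ - A + 1 := by linarith
  simp only [intervalIntegral_zero_one_eq_integral_Ioi_exp_neg, smul_eq_mul, sub_sub_cancel,
    log_exp, neg_neg]
  rw [setIntegral_congr_fun measurableSet_Ioi fun t ht ↦
      phm_integrand_exp_neg θ A B α hθ ht,
    integral_const_mul, integral_rpow_mul_exp_neg_mul_Ioi (by linarith) (div_pos hc hθ),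
    one_div_div, div_rpow hθ.le hc.le]
  have hθpow : θ ^ (B - 1) * θ ^ (α - B + 1) = θ ^ α := by
    rw [← rpow_add hθ]; ring_nf
  rw [← hθpow]
  ring

theorem qfcre_phm (θ A B α : ℝ) (hθ : 0 < θ) (hA : 0 < A) (hB : B < 1)
    (hθA : A - 1 < θ) (hα0 : 0 ≤ α) (hα1 : α ≤ 1) :
    ∫ p in (0:ℝ)..1,
        (1 - p) * (-Real.log (1 - p)) ^ α *
          (θ ^ (B - 1) * (1 - p) ^ ((1 - A) / θ - 1) * (-Real.log (1 - p)) ^ (-B))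
      = θ ^ α * Real.Gamma (α - B + 1) / (θ - A + 1) ^ (α - B + 1) :=
  qfcre_phm_general θ A B α hθ hB hθA hα0
end

section
/- Hazard quantile ordering does not imply Q-DFCRE ordering in either direction: for X uniform on (0,2) and Y exponential with rate 1, E_α^Q(X,u) = (1-u)Γ(α+1)/2^α ≤ Γ(α+1) = E_α^Q(Y,u) for all u ∈ [0,1) and α ∈ (0,1], yet H_X(u) = 1/(2(1-u)) ≥ H_Y(u) = 1 exactly when u > 1/2 and H_X(u) ≤ H_Y(u) when u < 1/2. -/
/-!
Substituting `p = 1 - (1 - u) e^{-t}` turns `log (1 - u) - log (1 - p)` into `t` and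
`(1 - p)^k dp` into `(1 - u)^(k+1) e^{-(k+1)t} dt`, so every Q-DFCRE integral of the form
`∫_u^1 (1 - p)^k (log (1 - u) - log (1 - p))^α dp` is a Gamma integral. The uniform law on
`(0, 2)` is the case `k = 1` (with `q = 2`), the unit exponential law the case `k = 0`
(with `q(p) = 1/(1 - p)`). The hazard comparisons are elementary.
-/

open MeasureTheory Set Real

lemma image_one_sub_mul_exp_neg_Ioi {u : ℝ} (hu : u < 1) :
    (fun t => 1 - (1 - u) * exp (-t)) '' Ioi 0 = Ioo u 1 := by
  have h1u : 0 < 1 - u := by linarith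
  ext p
  constructor
  · rintro ⟨t, ht, rfl⟩
    have hexp_lt : exp (-t) < 1 := exp_lt_one_iff.mpr (neg_lt_zero.mpr ht)
    have hexp_pos : 0 < exp (-t) := exp_pos _
    constructor <;> nlinarith
  · rintro ⟨hup, hp1⟩
    have h1p : 0 < 1 - p := by linarith
    refine ⟨log ((1 - u) / (1 - p)), log_pos ((one_lt_div h1p).mpr (by linarith)), ?_⟩
    simp only [exp_neg, exp_log (div_pos h1u h1p)]
    field_simp
    ring

lemma integral_Ioo_eq_integral_Ioi_one_sub_mul_exp_neg {u : ℝ} (hu : u < 1) (g : ℝ → ℝ) :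
    ∫ p in Ioo u 1, g p
      = ∫ t in Ioi 0, ((1 - u) * exp (-t)) * g (1 - (1 - u) * exp (-t)) := by
  have h1u : 0 < 1 - u := by linarith
  have hderiv : ∀ t : ℝ,
      HasDerivAt (fun t => 1 - (1 - u) * exp (-t)) ((1 - u) * exp (-t)) t := fun t =>
    ((((hasDerivAt_neg t).exp).const_mul (1 - u)).const_sub 1).congr_deriv (by ring)
  have hinj : InjOn (fun t => 1 - (1 - u) * exp (-t)) (Ioi 0) := fun t₁ _ t₂ _ h => by
    have h' : exp (-t₁) = exp (-t₂) := mul_left_cancel₀ h1u.ne' (by simpa using h)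
    simpa using exp_injective h'
  rw [← image_one_sub_mul_exp_neg_Ioi hu,
    integral_image_eq_integral_abs_deriv_smul measurableSet_Ioi
      (fun t _ => (hderiv t).hasDerivWithinAt) hinj]
  refine setIntegral_congr_fun measurableSet_Ioi fun t _ => ?_
  rw [abs_of_pos (by positivity), smul_eq_mul]

theorem integral_one_sub_pow_mul_log_sub_log_rpow {u α : ℝ} (hu : u < 1) (hα : -1 < α)
    (k : ℕ) :
    ∫ p in u..1, (1 - p) ^ k * (log (1 - u) - log (1 - p)) ^ α
      = (1 - u) ^ (k + 1) * Gamma (α + 1) / (k + 1) ^ (α + 1) := by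
  have h1u : 0 < 1 - u := by linarith
  have hintegrand : ∀ t ∈ Ioi (0 : ℝ),
      ((1 - u) * exp (-t)) * ((1 - (1 - (1 - u) * exp (-t))) ^ k
          * (log (1 - u) - log (1 - (1 - (1 - u) * exp (-t)))) ^ α)
        = (1 - u) ^ (k + 1) * (t ^ (α + 1 - 1) * exp (-((k + 1) * t))) := by
    intro t _
    rw [sub_sub_cancel, log_mul h1u.ne' (exp_ne_zero _), log_exp, add_sub_cancel_right,
      sub_add_cancel_left, neg_neg, mul_pow, ← exp_nat_mul,
      show -((k + 1) * t) = k * -t + -t by ring, exp_add]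
    ring
  rw [intervalIntegral.integral_of_le hu.le, integral_Ioc_eq_integral_Ioo,
    integral_Ioo_eq_integral_Ioi_one_sub_mul_exp_neg hu,
    setIntegral_congr_fun measurableSet_Ioi hintegrand, integral_const_mul,
    integral_rpow_mul_exp_neg_mul_Ioi (by linarith) (by positivity), one_div,
    inv_rpow (by positivity)]
  ring

theorem hazard_order_does_not_imply_qdfcre_order_general (α : ℝ) (hα0 : 0 < α) :
    (∀ u ∈ Set.Ico (0:ℝ) 1,
        (1 / (1 - u)) *
            (∫ p in u..1, (1 - p) * (Real.log (1 - u) - Real.log (1 - p)) ^ α * 2)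
          = (1 - u) * Real.Gamma (α + 1) / 2 ^ α) ∧
    (∀ u ∈ Set.Ico (0:ℝ) 1,
        (1 / (1 - u)) *
            (∫ p in u..1,
              (1 - p) * (Real.log (1 - u) - Real.log (1 - p)) ^ α * (1 / (1 - p)))
          = Real.Gamma (α + 1)) ∧
    (∀ u ∈ Set.Ico (0:ℝ) 1,
        (1 - u) * Real.Gamma (α + 1) / 2 ^ α ≤ Real.Gamma (α + 1)) ∧
    (∀ u ∈ Set.Ioo ((1:ℝ)/2) 1, (1:ℝ) ≤ 1 / (2 * (1 - u))) ∧
    (∀ u ∈ Set.Ioo (0:ℝ) (1/2), 1 / (2 * (1 - u)) ≤ 1) := by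
  have hα : -1 < α := by linarith
  refine ⟨fun u ⟨_, hu⟩ => ?_, fun u ⟨_, hu⟩ => ?_, fun u ⟨hu, _⟩ => ?_,
    fun u ⟨hu, _⟩ => ?_, fun u ⟨_, hu⟩ => ?_⟩
  · have h := integral_one_sub_pow_mul_log_sub_log_rpow hu hα 1
    simp only [pow_one, Nat.cast_one, one_add_one_eq_two] at h
    simp_rw [mul_comm _ (2 : ℝ), intervalIntegral.integral_const_mul, h,
      rpow_add_one two_ne_zero]
    field_simp [(sub_pos.mpr hu).ne']
  · have h := integral_one_sub_pow_mul_log_sub_log_rpow hu hα 0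
    have hae : ∀ᵐ p ∂volume, p ∈ uIoc u 1 →
        (1 - p) * (log (1 - u) - log (1 - p)) ^ α * (1 / (1 - p))
          = (1 - p) ^ 0 * (log (1 - u) - log (1 - p)) ^ α := by
      filter_upwards [Measure.ae_ne volume 1] with p hp1 _
      field_simp [sub_ne_zero.mpr (Ne.symm hp1)]
    rw [intervalIntegral.integral_congr_ae hae, h]
    simp only [zero_add, pow_one, Nat.cast_zero, one_rpow, div_one]
    field_simp [(sub_pos.mpr hu).ne']
  · have hΓ : 0 < Gamma (α + 1) := Gamma_pos_of_pos (by linarith)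
    have h2α : 1 ≤ (2 : ℝ) ^ α := one_le_rpow one_le_two hα0.le
    rw [div_le_iff₀ (by positivity)]
    nlinarith
  · rw [le_div_iff₀ (by linarith)]
    linarith
  · rw [div_le_one (by linarith)]
    linarith

theorem hazard_order_does_not_imply_qdfcre_order (α : ℝ) (hα0 : 0 < α) (hα1 : α ≤ 1) :
    (∀ u ∈ Set.Ico (0:ℝ) 1,
        (1 / (1 - u)) *
            (∫ p in u..1, (1 - p) * (Real.log (1 - u) - Real.log (1 - p)) ^ α * 2)
          = (1 - u) * Real.Gamma (α + 1) / 2 ^ α) ∧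
    (∀ u ∈ Set.Ico (0:ℝ) 1,
        (1 / (1 - u)) *
            (∫ p in u..1,
              (1 - p) * (Real.log (1 - u) - Real.log (1 - p)) ^ α * (1 / (1 - p)))
          = Real.Gamma (α + 1)) ∧
    (∀ u ∈ Set.Ico (0:ℝ) 1,
        (1 - u) * Real.Gamma (α + 1) / 2 ^ α ≤ Real.Gamma (α + 1)) ∧
    (∀ u ∈ Set.Ioo ((1:ℝ)/2) 1, (1:ℝ) ≤ 1 / (2 * (1 - u))) ∧
    (∀ u ∈ Set.Ioo (0:ℝ) (1/2), 1 / (2 * (1 - u)) ≤ 1) :=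
  hazard_order_does_not_imply_qdfcre_order_general α hα0
end
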